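/- Let ρ ∈ ℝ, ρ ≠ 0, and assume T^#T + ρ·V^#V is positive semidefinite on H. Then the following are equivalent: (1) for every z₀ ∈ E the function F_ρ(x) = [Tx,Tx]_K + ρ·[Vx−z₀,Vx−z₀]_E attains a global minimum on H; (2) R(L) + R(L)^[⊥] = K×E (i.e. R(L) is a regular subspace); (3) range(T^#T + ρ·V^#V) = (ker T)^⊥ + (ker V)^⊥, where ⊥ denotes the Hilbert orthogonal complement in H. Moreover, in this case, if x̃ is a global minimizer of F_ρ then the set of global minimizers of F_ρ equals x̃ + (ker T ∩ ker V). -/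

import Mathlib

/-!
Write `A = T^#T + ρ·V^#V` as `L^# L`, where `L^#(y, z) = T^# y + ρ·V^# z`. Up to a constant,
`F_ρ(x) = Re⟨Ax, x⟩ - 2 Re⟨x, L^#(0, z₀)⟩`, and `A` is a positive operator, so the minimizers of
`F_ρ` are exactly the solutions of `Ax = L^#(0, z₀)`. Each of the three conditions is then
equivalent to `range L^# ⊆ range A`: for (1) because `T` is surjective, for (2) because
`R(L)^[⊥] = ker L^#`, and for (3) because `range A ⊆ range L^#` always while
`range L^# = range T* + range V* = (ker T)^⊥ + (ker V)^⊥`, adjoints of surjections having closed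
range. Finally `ker A = (range A)^⊥ = ker T ∩ ker V` describes the set of minimizers.
-/

open scoped ComplexInnerProductSpace Pointwise

noncomputable section

variable {H K E : Type*}
  [NormedAddCommGroup H] [InnerProductSpace ℂ H] [CompleteSpace H]
  [NormedAddCommGroup K] [InnerProductSpace ℂ K] [CompleteSpace K]
  [NormedAddCommGroup E] [InnerProductSpace ℂ E] [CompleteSpace E]

/-- The operator `T^#T + ρ·V^#V = T*∘J_K∘T + ρ·V*∘J_E∘V` on `H`. -/
def smOp (JK : K →L[ℂ] K) (JE : E →L[ℂ] E) (T : H →L[ℂ] K) (V : H →L[ℂ] E) (ρ : ℝ) :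
    H →L[ℂ] H :=
  (ContinuousLinearMap.adjoint T) ∘L JK ∘L T +
    (ρ : ℂ) • ((ContinuousLinearMap.adjoint V) ∘L JE ∘L V)

/-- An operator on `H` is positive semidefinite if its quadratic form `⟨Ax,x⟩` is real
and nonnegative for every `x`. -/
def IsPosSemidef (A : H →L[ℂ] H) : Prop :=
  ∀ x : H, (⟪A x, x⟫).im = 0 ∧ 0 ≤ (⟪A x, x⟫).re

/-- `sm(ρ,z₀)`: the set of global minimizers of
`F_ρ(x) = [Tx,Tx]_K + ρ·[Vx−z₀,Vx−z₀]_E` over `H`. -/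
def smSet (JK : K →L[ℂ] K) (JE : E →L[ℂ] E) (T : H →L[ℂ] K) (V : H →L[ℂ] E) (ρ : ℝ)
    (z₀ : E) : Set H :=
  {xt : H | ∀ x : H,
    (⟪JK (T xt), T xt⟫).re + ρ * (⟪JE (V xt - z₀), V xt - z₀⟫).re ≤
      (⟪JK (T x), T x⟫).re + ρ * (⟪JE (V x - z₀), V x - z₀⟫).re}

/-- `sp(w₀)`: the set of minimizers of `x ↦ [Tx,Tx]_K` subject to `Vx = w₀`. -/
def spSet (JK : K →L[ℂ] K) (T : H →L[ℂ] K) (V : H →L[ℂ] E) (w₀ : E) : Set H :=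
  {xt : H | V xt = w₀ ∧ ∀ x : H, V x = w₀ →
    (⟪JK (T xt), T xt⟫).re ≤ (⟪JK (T x), T x⟫).re}

/-- `R(L)^[⊥]`: the `[·,·]_ρ`-orthogonal companion of the range of `L = (T,V)`. -/
def RLperp (JK : K →L[ℂ] K) (JE : E →L[ℂ] E) (T : H →L[ℂ] K) (V : H →L[ℂ] E) (ρ : ℝ) :
    Set (K × E) :=
  {p : K × E | ∀ x : H, ⟪JK (T x), p.1⟫ + (ρ : ℂ) * ⟪JE (V x), p.2⟫ = 0}

/-- `N₀ = ker V ∩ ((T^#T)(ker V))^⊥`. -/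
def N0 (JK : K →L[ℂ] K) (T : H →L[ℂ] K) (V : H →L[ℂ] E) : Submodule ℂ H :=
  LinearMap.ker (V : H →ₗ[ℂ] E) ⊓
    (Submodule.map (((ContinuousLinearMap.adjoint T) ∘L JK ∘L T : H →L[ℂ] H) : H →ₗ[ℂ] H)
      (LinearMap.ker (V : H →ₗ[ℂ] E)))ᗮ


open scoped InnerProductSpace NNReal
open ContinuousLinearMap RCLike Set

theorem eq_zero_of_forall_mul_sq_add_mul_nonneg {𝕂 : Type*} [Field 𝕂] [LinearOrder 𝕂]
    [IsStrictOrderedRing 𝕂] {a b : 𝕂} (h : ∀ t : 𝕂, 0 ≤ a * (t * t) + b * t) : b = 0 := by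
  have := discrim_le_zero (K := 𝕂) (c := 0) (by simpa using h)
  rw [discrim] at this
  nlinarith [sq_nonneg b]

theorem LinearMap.range_sup_ker_eq_top_iff {R M N P : Type*} [Ring R]
    [AddCommGroup M] [Module R M] [AddCommGroup N] [Module R N] [AddCommGroup P] [Module R P]
    (L : M →ₗ[R] N) (S : N →ₗ[R] P) :
    LinearMap.range L ⊔ LinearMap.ker S = ⊤ ↔ LinearMap.range S ≤ LinearMap.range (S ∘ₗ L) := by
  rw [LinearMap.range_comp, LinearMap.range_eq_map S, LinearMap.map_le_map_iff, top_le_iff]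

theorem LinearMap.setOf_apply_eq_eq_image_add_ker {R M N : Type*} [Ring R]
    [AddCommGroup M] [Module R M] [AddCommGroup N] [Module R N]
    (f : M →ₗ[R] N) {x₀ : M} {c : N} (hx₀ : f x₀ = c) :
    {x | f x = c} = (x₀ + ·) '' (LinearMap.ker f : Set M) := by
  ext x
  refine ⟨fun (hx : f x = c) => ⟨x - x₀, by simp [hx, hx₀], add_sub_cancel x₀ x⟩, ?_⟩
  rintro ⟨n, hn, rfl⟩
  simp_all

section Hilbert

variable {𝕜 X Y : Type*} [RCLike 𝕜]
  [NormedAddCommGroup X] [InnerProductSpace 𝕜 X] [NormedAddCommGroup Y] [InnerProductSpace 𝕜 Y]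

theorem ContinuousLinearMap.exists_norm_le_mul_norm_adjoint_apply [CompleteSpace X]
    [CompleteSpace Y] {T : X →L[𝕜] Y} (hT : Function.Surjective T) :
    ∃ C : ℝ≥0, ∀ y, ‖y‖ ≤ C * ‖adjoint T y‖ := by
  obtain ⟨C, hC0, hC⟩ := T.exists_preimage_norm_le hT
  refine ⟨⟨C, hC0.le⟩, fun y => ?_⟩
  obtain ⟨x, rfl, hx⟩ := hC y
  have hsq : ‖T x‖ * ‖T x‖ ≤ C * ‖adjoint T (T x)‖ * ‖T x‖ := calc
    ‖T x‖ * ‖T x‖ = re ⟪adjoint T (T x), x⟫_𝕜 := by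
        rw [adjoint_inner_left, ← inner_self_eq_norm_mul_norm (𝕜 := 𝕜)]
    _ ≤ ‖adjoint T (T x)‖ * ‖x‖ := re_inner_le_norm _ _
    _ ≤ C * ‖adjoint T (T x)‖ * ‖T x‖ := by
        nlinarith [norm_nonneg (adjoint T (T x))]
  rcases (norm_nonneg (T x)).eq_or_lt with h0 | hTx
  · rw [← h0]
    positivity
  · exact le_of_mul_le_mul_right hsq hTx

theorem ContinuousLinearMap.range_adjoint_eq_orthogonal_ker [CompleteSpace X]
    [CompleteSpace Y] {T : X →L[𝕜] Y} (hT : Function.Surjective T) :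
    LinearMap.range (adjoint T : Y →ₗ[𝕜] X) = (LinearMap.ker (T : X →ₗ[𝕜] Y))ᗮ := by
  obtain ⟨C, hC⟩ := T.exists_norm_le_mul_norm_adjoint_apply hT
  rw [T.orthogonal_ker, IsClosed.submodule_topologicalClosure_eq]
  rw [LinearMap.coe_range, coe_coe]
  exact ((adjoint T).antilipschitz_of_bound hC).isClosed_range (adjoint T).uniformContinuous

theorem ContinuousLinearMap.re_inner_add_sub_eq_of_isSymmetric {A : X →L[𝕜] X}
    (hA : (A : X →ₗ[𝕜] X).IsSymmetric) (b x v : X) :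
    re ⟪A (x + v), x + v⟫_𝕜 - 2 * re ⟪x + v, b⟫_𝕜 =
      re ⟪A x, x⟫_𝕜 - 2 * re ⟪x, b⟫_𝕜 + re ⟪A v, v⟫_𝕜 + 2 * re ⟪v, A x - b⟫_𝕜 := by
  have hsymm : re ⟪A v, x⟫_𝕜 = re ⟪v, A x⟫_𝕜 := congrArg re (hA v x)
  have hconj : re ⟪A x, v⟫_𝕜 = re ⟪v, A x⟫_𝕜 := inner_re_symm _ _
  simp only [map_add, inner_add_left, inner_add_right, inner_sub_right, map_sub]
  linarith

theorem ContinuousLinearMap.IsPositive.isMinOn_iff {A : X →L[𝕜] X} (hA : A.IsPositive)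
    (b x₀ : X) :
    IsMinOn (fun x => re ⟪A x, x⟫_𝕜 - 2 * re ⟪x, b⟫_𝕜) univ x₀ ↔ A x₀ = b := by
  rw [isMinOn_univ_iff]
  constructor
  · intro hmin
    have hquad : ∀ t : ℝ,
        0 ≤ re ⟪A (A x₀ - b), A x₀ - b⟫_𝕜 * (t * t) + 2 * ‖A x₀ - b‖ ^ 2 * t := fun t => by
      have := hmin (x₀ + (t : 𝕜) • (A x₀ - b))
      rw [re_inner_add_sub_eq_of_isSymmetric hA.isSymmetric] at this
      simp only [map_smul, inner_smul_left, inner_smul_right, conj_ofReal, re_ofReal_mul,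
        inner_self_eq_norm_sq] at this
      nlinarith
    have := eq_zero_of_forall_mul_sq_add_mul_nonneg hquad
    exact sub_eq_zero.mp (by simpa using this)
  · intro hx₀ x
    have := re_inner_add_sub_eq_of_isSymmetric hA.isSymmetric b x₀ (x - x₀)
    rw [add_sub_cancel, sub_eq_zero.mpr hx₀, inner_zero_right, map_zero] at this
    linarith [hA.re_inner_nonneg_left (x - x₀)]

end Hilbert

section KreinAdjointPair

variable (JK : K →L[ℂ] K) (JE : E →L[ℂ] E) (T : H →L[ℂ] K) (V : H →L[ℂ] E) (ρ : ℝ)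

/-- `L^#(y, z) = T^# y + ρ·V^# z`, the adjoint of `L = (T, V)` for `[·,·]_ρ`. -/
def kreinAdjointPair : K × E →L[ℂ] H :=
  (adjoint T ∘L JK).coprod ((ρ : ℂ) • (adjoint V ∘L JE))

theorem smOp_eq_kreinAdjointPair_comp :
    smOp JK JE T V ρ = kreinAdjointPair JK JE T V ρ ∘L T.prod V := by
  ext x
  simp [smOp, kreinAdjointPair]

variable {JK JE}

theorem inner_kreinAdjointPair (hJK : IsSelfAdjoint JK) (hJE : IsSelfAdjoint JE) (x : H)
    (p : K × E) :
    ⟪x, kreinAdjointPair JK JE T V ρ p⟫ = ⟪JK (T x), p.1⟫ + (ρ : ℂ) * ⟪JE (V x), p.2⟫ := by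
  have hK : ⟪T x, JK p.1⟫ = ⟪JK (T x), p.1⟫ := (hJK.isSymmetric (T x) p.1).symm
  have hE : ⟪V x, JE p.2⟫ = ⟪JE (V x), p.2⟫ := (hJE.isSymmetric (V x) p.2).symm
  simp [kreinAdjointPair, adjoint_inner_right, hK, hE]

theorem mem_RLperp_iff (hJK : IsSelfAdjoint JK) (hJE : IsSelfAdjoint JE) {p : K × E} :
    p ∈ RLperp JK JE T V ρ ↔ kreinAdjointPair JK JE T V ρ p = 0 := by
  simp only [RLperp, mem_ofPred_eq, ← inner_kreinAdjointPair T V ρ hJK hJE]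
  exact ⟨fun h => inner_self_eq_zero.mp (h _), fun h x => by rw [h, inner_zero_right]⟩

theorem isSelfAdjoint_smOp (hJK : IsSelfAdjoint JK) (hJE : IsSelfAdjoint JE) :
    IsSelfAdjoint (smOp JK JE T V ρ) :=
  (hJK.adjoint_conj T).add
    (((Complex.im_eq_zero_iff_isSelfAdjoint _).mp rfl).smul (hJE.adjoint_conj V))

theorem isPositive_smOp (hJK : IsSelfAdjoint JK) (hJE : IsSelfAdjoint JE)
    (hpos : IsPosSemidef (smOp JK JE T V ρ)) : (smOp JK JE T V ρ).IsPositive :=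
  isPositive_def'.mpr ⟨isSelfAdjoint_smOp T V ρ hJK hJE, fun x => (hpos x).2⟩

theorem smObjective_eq (hJK : IsSelfAdjoint JK) (hJE : IsSelfAdjoint JE) (z₀ : E) (x : H) :
    (⟪JK (T x), T x⟫).re + ρ * (⟪JE (V x - z₀), V x - z₀⟫).re =
      (⟪smOp JK JE T V ρ x, x⟫).re - 2 * (⟪x, kreinAdjointPair JK JE T V ρ (0, z₀)⟫).re +
        ρ * (⟪JE z₀, z₀⟫).re := by
  have hA : ⟪smOp JK JE T V ρ x, x⟫ = ⟪JK (T x), T x⟫ + (ρ : ℂ) * ⟪JE (V x), V x⟫ := by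
    rw [show ⟪smOp JK JE T V ρ x, x⟫ = ⟪x, smOp JK JE T V ρ x⟫ from
      (isSelfAdjoint_smOp T V ρ hJK hJE).isSymmetric x x, smOp_eq_kreinAdjointPair_comp]
    exact inner_kreinAdjointPair T V ρ hJK hJE x (T x, V x)
  have hE : ⟪JE z₀, V x⟫ = starRingEnd ℂ ⟪JE (V x), z₀⟫ := by
    rw [inner_conj_symm]
    exact hJE.isSymmetric z₀ (V x)
  rw [hA, inner_kreinAdjointPair T V ρ hJK hJE]
  simp only [map_sub, inner_sub_left, inner_sub_right, inner_zero_right, Complex.add_re,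
    Complex.sub_re, Complex.re_ofReal_mul, zero_add, hE, Complex.conj_re]
  linarith

theorem smSet_eq (hJK : IsSelfAdjoint JK) (hJE : IsSelfAdjoint JE)
    (hpos : IsPosSemidef (smOp JK JE T V ρ)) (z₀ : E) :
    smSet JK JE T V ρ z₀ = {x | smOp JK JE T V ρ x = kreinAdjointPair JK JE T V ρ (0, z₀)} := by
  ext xt
  rw [mem_ofPred_eq, ← (isPositive_smOp T V ρ hJK hJE hpos).isMinOn_iff, isMinOn_univ_iff]
  simp only [smSet, mem_ofPred_eq, smObjective_eq T V ρ hJK hJE, add_le_add_iff_right]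
  rfl

theorem range_kreinAdjointPair (hJK2 : JK ∘L JK = 1) (hJE2 : JE ∘L JE = 1) (hρ : ρ ≠ 0)
    (hT : Function.Surjective T) (hV : Function.Surjective V) :
    LinearMap.range (kreinAdjointPair JK JE T V ρ : K × E →ₗ[ℂ] H) =
      (LinearMap.ker (T : H →ₗ[ℂ] K))ᗮ ⊔ (LinearMap.ker (V : H →ₗ[ℂ] E))ᗮ := by
  have hJK : LinearMap.range (JK : K →ₗ[ℂ] K) = ⊤ :=
    LinearMap.range_eq_top.mpr fun y => ⟨JK y, by simpa using DFunLike.congr_fun hJK2 y⟩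
  have hJE : LinearMap.range (JE : E →ₗ[ℂ] E) = ⊤ :=
    LinearMap.range_eq_top.mpr fun z => ⟨JE z, by simpa using DFunLike.congr_fun hJE2 z⟩
  rw [kreinAdjointPair, coe_coprod, LinearMap.range_coprod, toLinearMap_smul,
    LinearMap.range_smul _ _ (Complex.ofReal_ne_zero.mpr hρ), toLinearMap_comp, toLinearMap_comp,
    LinearMap.range_comp_of_range_eq_top _ hJK, LinearMap.range_comp_of_range_eq_top _ hJE,
    range_adjoint_eq_orthogonal_ker hT, range_adjoint_eq_orthogonal_ker hV]

theorem forall_smSet_nonempty_iff (hJK : IsSelfAdjoint JK) (hJE : IsSelfAdjoint JE)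
    (hpos : IsPosSemidef (smOp JK JE T V ρ)) (hT : Function.Surjective T) :
    (∀ z₀ : E, (smSet JK JE T V ρ z₀).Nonempty) ↔
      LinearMap.range (kreinAdjointPair JK JE T V ρ : K × E →ₗ[ℂ] H) ≤
        LinearMap.range (smOp JK JE T V ρ : H →ₗ[ℂ] H) := by
  simp only [smSet_eq T V ρ hJK hJE hpos]
  constructor
  · rintro h _ ⟨⟨y, z⟩, rfl⟩
    obtain ⟨x, rfl⟩ := hT y
    obtain ⟨x', hx'⟩ := h (z - V x)
    refine ⟨x + x', ?_⟩
    calc smOp JK JE T V ρ (x + x')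
        = kreinAdjointPair JK JE T V ρ ((T x, V x) + (0, z - V x)) := by
          rw [map_add, hx', smOp_eq_kreinAdjointPair_comp, map_add]
          rfl
      _ = kreinAdjointPair JK JE T V ρ (T x, z) := by simp
  · intro h z₀
    exact h ⟨(0, z₀), rfl⟩

theorem range_add_RLperp_eq_univ_iff (hJK : IsSelfAdjoint JK) (hJE : IsSelfAdjoint JE) :
    Set.range (fun x : H => (T x, V x)) + RLperp JK JE T V ρ = univ ↔
      LinearMap.range (kreinAdjointPair JK JE T V ρ : K × E →ₗ[ℂ] H) ≤
        LinearMap.range (smOp JK JE T V ρ : H →ₗ[ℂ] H) := by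
  have hrange : Set.range (fun x : H => (T x, V x)) =
      LinearMap.range ((T.prod V : H →L[ℂ] K × E) : H →ₗ[ℂ] K × E) := by
    rw [LinearMap.coe_range]
    rfl
  have hperp : RLperp JK JE T V ρ =
      LinearMap.ker (kreinAdjointPair JK JE T V ρ : K × E →ₗ[ℂ] H) := by
    ext p
    exact mem_RLperp_iff T V ρ hJK hJE
  rw [hrange, hperp, ← Submodule.coe_sup, Submodule.coe_eq_univ, LinearMap.range_sup_ker_eq_top_iff,
    smOp_eq_kreinAdjointPair_comp, toLinearMap_comp]

theorem range_smOp_eq_iff (hJK2 : JK ∘L JK = 1) (hJE2 : JE ∘L JE = 1) (hρ : ρ ≠ 0)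
    (hT : Function.Surjective T) (hV : Function.Surjective V) :
    LinearMap.range (smOp JK JE T V ρ : H →ₗ[ℂ] H) =
        (LinearMap.ker (T : H →ₗ[ℂ] K))ᗮ ⊔ (LinearMap.ker (V : H →ₗ[ℂ] E))ᗮ ↔
      LinearMap.range (kreinAdjointPair JK JE T V ρ : K × E →ₗ[ℂ] H) ≤
        LinearMap.range (smOp JK JE T V ρ : H →ₗ[ℂ] H) := by
  rw [← range_kreinAdjointPair T V ρ hJK2 hJE2 hρ hT hV]
  refine ⟨ge_of_eq, fun h => le_antisymm ?_ h⟩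
  rw [smOp_eq_kreinAdjointPair_comp, toLinearMap_comp]
  exact LinearMap.range_comp_le_range _ _

theorem ker_smOp (hJK : IsSelfAdjoint JK) (hJE : IsSelfAdjoint JE)
    (h : LinearMap.range (smOp JK JE T V ρ : H →ₗ[ℂ] H) =
      (LinearMap.ker (T : H →ₗ[ℂ] K))ᗮ ⊔ (LinearMap.ker (V : H →ₗ[ℂ] E))ᗮ) :
    LinearMap.ker (smOp JK JE T V ρ : H →ₗ[ℂ] H) =
      LinearMap.ker (T : H →ₗ[ℂ] K) ⊓ LinearMap.ker (V : H →ₗ[ℂ] E) := by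
  rw [← (isSelfAdjoint_smOp T V ρ hJK hJE).isSymmetric.orthogonal_range, h,
    ← Submodule.inf_orthogonal, Submodule.orthogonal_orthogonal_eq_closure,
    Submodule.orthogonal_orthogonal_eq_closure,
    (isClosed_ker T).submodule_topologicalClosure_eq,
    (isClosed_ker V).submodule_topologicalClosure_eq]

end KreinAdjointPair

theorem stmt8
    (JK : K →L[ℂ] K) (hJKsa : IsSelfAdjoint JK) (hJK2 : JK ∘L JK = 1)
    (JE : E →L[ℂ] E) (hJEsa : IsSelfAdjoint JE) (hJE2 : JE ∘L JE = 1)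
    (T : H →L[ℂ] K) (V : H →L[ℂ] E)
    (hT : Function.Surjective T) (hV : Function.Surjective V)
    (ρ : ℝ) (hρ : ρ ≠ 0)
    (hpos : IsPosSemidef (smOp JK JE T V ρ)) :
    ((∀ z₀ : E, (smSet JK JE T V ρ z₀).Nonempty) ↔
      (Set.range (fun x : H => (T x, V x)) + RLperp JK JE T V ρ = Set.univ)) ∧
    ((Set.range (fun x : H => (T x, V x)) + RLperp JK JE T V ρ = Set.univ) ↔
      (LinearMap.range (smOp JK JE T V ρ : H →ₗ[ℂ] H) =
        (LinearMap.ker (T : H →ₗ[ℂ] K))ᗮ ⊔ (LinearMap.ker (V : H →ₗ[ℂ] E))ᗮ)) ∧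
    ((∀ z₀ : E, (smSet JK JE T V ρ z₀).Nonempty) →
      ∀ z₀ : E, ∀ xt ∈ smSet JK JE T V ρ z₀,
        smSet JK JE T V ρ z₀ =
          (fun n => xt + n) '' ((LinearMap.ker (T : H →ₗ[ℂ] K) ⊓ LinearMap.ker (V : H →ₗ[ℂ] E) : Submodule ℂ H) : Set H)) := by
  have h₁ := forall_smSet_nonempty_iff T V ρ hJKsa hJEsa hpos hT
  have h₂ := range_add_RLperp_eq_univ_iff T V ρ hJKsa hJEsa
  have h₃ := range_smOp_eq_iff T V ρ hJK2 hJE2 hρ hT hV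
  refine ⟨h₁.trans h₂.symm, h₂.trans h₃.symm, fun h z₀ xt hxt => ?_⟩
  rw [smSet_eq T V ρ hJKsa hJEsa hpos] at hxt ⊢
  rw [← ker_smOp T V ρ hJKsa hJEsa (h₃.mpr (h₁.mp h))]
  exact LinearMap.setOf_apply_eq_eq_image_add_ker _ hxt
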